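/- arXiv:1305.3455 — 3 statements merged into one kernel-verified Lean document; each statement's English description precedes it below -/
import Mathlib

section
/- For every r ≥ 1 and every list [i₁, …, i_r] over ZMod 3, the right complement of a_{i₁}·a_{i₂}·⋯·a_{i_r} equals a_{i_r+2}·a_{i_{r-1}+3}·⋯·a_{i₁+r+1}; that is, (a_{i₁}⋯a_{i_r})* = ∏_{j=1}^{r} a_{i_{r+1-j}+j+1}, all indices taken modulo 3. -/
namespace Braid

/-- Relations of the dual (band-generator) presentation of the 3-braid group:
`a (i+1) * a i = a (i+2) * a (i+1)` for all `i : ZMod 3`. -/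
def braidRels : Set (FreeGroup (ZMod 3)) :=
  { r | ∃ i : ZMod 3,
      r = FreeGroup.of (i + 1) * FreeGroup.of i *
          (FreeGroup.of (i + 2) * FreeGroup.of (i + 1))⁻¹ }

/-- The 3-braid group with the band-generator presentation. -/
abbrev B3 := PresentedGroup braidRels

/-- The band generators `a i`, `i : ZMod 3`. -/
def a (i : ZMod 3) : B3 := PresentedGroup.of i

/-- The fundamental element `δ = a₂ * a₁`. -/
def δ : B3 := a 2 * a 1

/-- The submonoid of positive braids. -/
def Pos : Submonoid B3 := Submonoid.closure (Set.range a)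

/-- The exponent-sum homomorphism, sending each generator to `1 : ℤ`. -/
def eHom : B3 →* Multiplicative ℤ :=
  PresentedGroup.toGroup (f := fun _ => Multiplicative.ofAdd (1 : ℤ)) (by
    rintro r ⟨i, rfl⟩
    simp only [map_mul, map_inv, FreeGroup.lift_apply_of]
    group)

/-- The exponent sum (letter length on positive braids) as an integer. -/
def elen (x : B3) : ℤ := Multiplicative.toAdd (eHom x)

/-- The right complement `X* = X⁻¹ * δ^{e(X)}`. -/
def rc (X : B3) : B3 := X⁻¹ * δ ^ elen X

/-- The `n`-th power of the rotation automorphism `τ`: `τ^n (x) = δ^{-n} * x * δ^n`. -/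
def tauPow (n : ℤ) (x : B3) : B3 := δ ^ (-n) * x * δ ^ n

/-- The positive braid represented by a list of generator indices. -/
def wordProd (l : List (ZMod 3)) : B3 := (l.map a).prod

/-- A word is nondecreasing if each letter index is the previous one or the previous one
plus `1` (mod 3). -/
def NDWord (l : List (ZMod 3)) : Prop :=
  l.Chain' (fun x y => y = x ∨ y = x + 1)

/-- The syllable number of a word: the number of maximal constant blocks. -/
def syl : List (ZMod 3) → ℕ
  | [] => 0
  | [_] => 1
  | x :: y :: t => (if x = y then 0 else 1) + syl (y :: t)

/-- The permutations underlying the band generators. -/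
def perm3 (i : ZMod 3) : Equiv.Perm (Fin 3) :=
  if i = 0 then Equiv.swap 0 2 else if i = 1 then Equiv.swap 0 1 else Equiv.swap 1 2

lemma perm3_rel : ∀ i : ZMod 3,
    perm3 (i + 1) * perm3 i * (perm3 (i + 2) * perm3 (i + 1))⁻¹ = 1 := by decide

/-- The homomorphism to the symmetric group on 3 letters (underlying permutation). -/
def permOf : B3 →* Equiv.Perm (Fin 3) :=
  PresentedGroup.toGroup (f := perm3) (by
    rintro r ⟨i, rfl⟩
    simp only [map_mul, map_inv, FreeGroup.lift_apply_of]
    exact perm3_rel i)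

/-- The set of band generators and their inverses. -/
def genSet : Set B3 := Set.range a ∪ Set.range (fun i => (a i)⁻¹)

/-- The band-generator word length of a 3-braid. -/
noncomputable def wordLen (x : B3) : ℕ :=
  sInf { n | ∃ s : List B3, s.length = n ∧ (∀ g ∈ s, g ∈ genSet) ∧ s.prod = x }

/-- The minimal band-generator word length in the conjugacy class. -/
noncomputable def minConjLen (x : B3) : ℕ :=
  sInf { n | ∃ y, IsConj x y ∧ wordLen y = n }

/-- `α` is a summit element with summit exponent `u` if `δ^{-u} * α` is positive and `u` is
the maximal such exponent over the conjugacy class. -/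
def IsSummit (α : B3) (u : ℤ) : Prop :=
  δ ^ (-u) * α ∈ Pos ∧ ∀ β : B3, IsConj α β → ∀ v : ℤ, δ ^ (-v) * β ∈ Pos → v ≤ u

/-!
Since `(a i)⁻¹ * δ = a (i + 2)`, appending a letter turns the complement into
`(X * a i)* = (a i)⁻¹ * X* * δ = a (i + 2) * τ(X*)`, and `τ` raises every generator index by one.
Induction on the word therefore prepends `a (i_r + 2)` to the previous complement with all its
indices shifted by one, which is the claimed formula.
-/

lemma a_succ_mul_a_eq_a_add_two_mul_a_succ (i : ZMod 3) :
    a (i + 1) * a i = a (i + 2) * a (i + 1) :=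
  PresentedGroup.mk_eq_mk_of_mul_inv_mem ⟨i, rfl⟩

lemma a_succ_mul_a (i : ZMod 3) : a (i + 1) * a i = δ := by
  fin_cases i
  · exact a_succ_mul_a_eq_a_add_two_mul_a_succ 0
  · rfl
  · exact (a_succ_mul_a_eq_a_add_two_mul_a_succ 1).symm

lemma a_mul_a_add_two (i : ZMod 3) : a i * a (i + 2) = δ := by
  simpa [add_assoc, show (2 : ZMod 3) + 1 = 0 from rfl] using a_succ_mul_a (i + 2)

lemma inv_a_mul_δ (i : ZMod 3) : (a i)⁻¹ * δ = a (i + 2) := by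
  rw [← a_mul_a_add_two i, inv_mul_cancel_left]

lemma a_mul_δ (i : ZMod 3) : a i * δ = δ * a (i + 1) := by
  calc a i * δ = a i * (a (i + 2) * a (i + 1)) := by
        rw [← a_succ_mul_a (i + 1), add_assoc, one_add_one_eq_two]
    _ = δ * a (i + 1) := by rw [← mul_assoc, a_mul_a_add_two]

lemma prod_map_a_mul_δ {α : Type*} (f : α → ZMod 3) (l : List α) :
    (l.map fun x => a (f x)).prod * δ = δ * (l.map fun x => a (f x + 1)).prod := by
  induction l with
  | nil => simp
  | cons x l ih =>
    simp only [List.map_cons, List.prod_cons]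
    rw [mul_assoc, ih, ← mul_assoc, a_mul_δ, mul_assoc]

lemma elen_mul (x y : B3) : elen (x * y) = elen x + elen y := by
  simp [elen]

lemma elen_a (i : ZMod 3) : elen (a i) = 1 := by
  simp [elen, a, eHom, PresentedGroup.toGroup.of]

lemma rc_mul_a (X : B3) (i : ZMod 3) : rc (X * a i) = a (i + 2) * (δ⁻¹ * rc X * δ) := by
  rw [← inv_a_mul_δ, rc, rc, elen_mul, elen_a, zpow_add_one]
  group

theorem rc_word_general (l : List (ZMod 3)) :
    rc (wordProd l) =
      ((l.reverse.zipIdx).map (fun p => a (p.1 + (p.2 : ZMod 3) + 2))).prod := by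
  induction l using List.reverseRecOn with
  | nil => simp [rc, wordProd, elen]
  | append_singleton l i ih =>
    have hword : wordProd (l ++ [i]) = wordProd l * a i := by simp [wordProd]
    rw [hword, rc_mul_a, ih, mul_assoc, prod_map_a_mul_δ, inv_mul_cancel_left,
      List.reverse_append, List.reverse_singleton, List.singleton_append, List.zipIdx_cons',
      List.map_cons, List.prod_cons, List.map_map]
    congr 2
    · simp
    · refine List.map_congr_left fun p _ => ?_
      simp only [Function.comp, Prod.map, id_eq, Nat.cast_add, Nat.cast_one]
      ring_nf

/-- Lemma 2.2(ii): `(a_{i₁} a_{i₂} ⋯ a_{i_r})* = a_{i_r+2} a_{i_{r-1}+3} ⋯ a_{i₁+r+1}`. -/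
theorem rc_word (l : List (ZMod 3)) (hl : 1 ≤ l.length) :
    rc (wordProd l) =
      ((l.reverse.zipIdx).map (fun p => a (p.1 + (p.2 : ZMod 3) + 2))).prod :=
  rc_word_general l
end Braid
end

section
/- For every i ∈ ZMod 3 and every r ≥ 1, the right complement of a_iʳ equals a_{i+2}·a_{i+3}·⋯·a_{i+r+1}; that is, (a_iʳ)* = ∏_{j=2}^{r+1} a_{i+j}, indices modulo 3. -/
namespace Braid

lemma semiconjBy_delta_a_succ (i : ZMod 3) : SemiconjBy δ (a (i + 1)) (a i) := by
  unfold SemiconjBy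
  calc δ * a (i + 1) = a i * (a (i + 1 + 1) * a (i + 1)) := by
        rw [← a_mul_a_add_two i, add_assoc i 1 1, one_add_one_eq_two, mul_assoc]
    _ = a i * δ := by rw [a_succ_mul_a]

lemma prod_ofFn_a_succ (i : ZMod 3) (n : ℕ) :
    (List.ofFn fun j : Fin (n + 1) => a (i + j + 2)).prod =
      a (i + 2) * (List.ofFn fun j : Fin n => a (i + 1 + j + 2)).prod := by
  simp only [List.ofFn_succ, List.prod_cons, Fin.val_zero, Fin.val_succ, Nat.cast_zero,
    Nat.cast_succ, add_zero]
  congr 3 with j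
  exact congrArg a (by ring)

lemma a_pow_mul_prod_ofFn (i : ZMod 3) (r : ℕ) :
    a i ^ r * (List.ofFn fun j : Fin r => a (i + j + 2)).prod = δ ^ r := by
  induction r generalizing i with
  | zero => simp
  | succ r ih =>
    calc a i ^ (r + 1) * (List.ofFn fun j : Fin (r + 1) => a (i + j + 2)).prod
        = a i ^ r * (a i * a (i + 2)) * (List.ofFn fun j : Fin r => a (i + 1 + j + 2)).prod := by
          rw [prod_ofFn_a_succ, pow_succ]; simp only [mul_assoc]
      _ = δ * (a (i + 1) ^ r * (List.ofFn fun j : Fin r => a (i + 1 + j + 2)).prod) := by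
          rw [a_mul_a_add_two, ← ((semiconjBy_delta_a_succ i).pow_right r).eq, mul_assoc]
      _ = δ ^ (r + 1) := by rw [ih, pow_succ']

lemma elen_a_pow (i : ZMod 3) (r : ℕ) : elen (a i ^ r) = r := by
  simp [elen, a, eHom, ← ofAdd_nsmul]

theorem rc_pow_general (i : ZMod 3) (r : ℕ) :
    rc ((a i) ^ r) =
      (List.ofFn (fun j : Fin r => a (i + ((j : ℕ) : ZMod 3) + 2))).prod := by
  rw [rc, elen_a_pow, zpow_natCast, ← a_pow_mul_prod_ofFn i r, inv_mul_cancel_left]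

/-- Lemma 2.2(iii): `(a_i^r)* = a_{i+2} a_{i+3} ⋯ a_{i+r+1}`. -/
theorem rc_pow (i : ZMod 3) (r : ℕ) (hr : 1 ≤ r) :
    rc ((a i) ^ r) =
      (List.ofFn (fun j : Fin r => a (i + ((j : ℕ) : ZMod 3) + 2))).prod :=
  rc_pow_general i r
end Braid
end

section
/- Let r ≥ 1, let u ∈ ℤ with u ≡ −r (mod 3), and let k₁, …, k_r ≥ 1 all be odd. Then π(δᵘ·a₁^{k₁}·a₂^{k₂}·⋯·a_r^{k_r}) = π(a_{r+2})^{−r} (all generator indices modulo 3); in particular this permutation is a power of a transposition and is not a 3-cycle, so the closure of δᵘ·a₁^{k₁}·⋯·a_r^{k_r} is not a knot. -/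
/-! If a homomorphism `f` from `B₃` sends every generator to an involution, as `π` does, then
`P := f δ = f (a (i+1)) * f (a i)` satisfies `P⁻¹ * f (a (i+1)) = f (a i)` and `P ^ 3 = 1`.
Odd powers of generators may then be replaced by the generators, `δ ^ u` by `P⁻¹ ^ r`, and
absorbing the factors `f (a 1), …, f (a n)` one at a time into `P⁻¹ ^ n` leaves
`f (a (n+2)) ^ n`. A power of an involution squares to `1`, so it is not a 3-cycle. -/

namespace Braid

lemma pow_eq_one_of_even_of_sq_eq_one {G : Type*} [Group G] {x : G} (hx : x ^ 2 = 1) {n : ℕ}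
    (hn : Even n) : x ^ n = 1 := by
  obtain ⟨m, rfl⟩ := hn
  rw [← two_mul, pow_mul, hx, one_pow]

lemma pow_eq_self_of_odd_of_sq_eq_one {G : Type*} [Group G] {x : G} (hx : x ^ 2 = 1) {n : ℕ}
    (hn : Odd n) : x ^ n = x := by
  obtain ⟨m, rfl⟩ := hn
  rw [pow_succ, pow_mul, hx, one_pow, one_mul]

lemma _root_.Equiv.Perm.IsThreeCycle.sq_ne_one {n : Type*} [Fintype n] [DecidableEq n]
    {σ : Equiv.Perm n} (hσ : σ.IsThreeCycle) : σ ^ 2 ≠ 1 := fun h => by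
  simpa [hσ.orderOf] using orderOf_dvd_of_pow_eq_one h

lemma δ_pow_three : δ ^ 3 = a 2 * a 1 * (a 1 * a 0) * (a 0 * a 2) := by
  rw [pow_three, ← mul_assoc, show a 1 * a 0 = δ from a_succ_mul_a 0,
    show a 0 * a 2 = δ from a_succ_mul_a 2]
  rfl

lemma permOf_a_sq (i : ZMod 3) : permOf (a i) ^ 2 = 1 := by
  rw [permOf, a, PresentedGroup.toGroup.of]
  revert i
  decide

section Involutions

variable {G : Type*} [Group G] {f : B3 →* G}

lemma map_a_inv (hf : ∀ i, f (a i) ^ 2 = 1) (i : ZMod 3) : (f (a i))⁻¹ = f (a i) :=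
  inv_eq_of_mul_eq_one_right (by rw [← sq, hf])

lemma map_δ_pow_three (hf : ∀ i, f (a i) ^ 2 = 1) : f δ ^ 3 = 1 := by
  have cancel (i : ZMod 3) (y : G) : f (a i) * (f (a i) * y) = y := by
    rw [← mul_assoc, ← sq, hf, one_mul]
  rw [← map_pow, δ_pow_three]
  simp only [map_mul, mul_assoc, cancel, ← sq, hf]

lemma inv_map_δ_mul_map_a_succ (hf : ∀ i, f (a i) ^ 2 = 1) (i : ZMod 3) :
    (f δ)⁻¹ * f (a (i + 1)) = f (a i) := by
  rw [← a_succ_mul_a i, map_mul, mul_inv_rev, inv_mul_cancel_right, map_a_inv hf]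

lemma inv_map_δ_pow_mul_prod_map_a_succ (hf : ∀ i, f (a i) ^ 2 = 1) (n : ℕ) :
    (f δ)⁻¹ ^ n * (List.ofFn fun j : Fin n => f (a ((j : ℕ) + 1))).prod =
      f (a ((n : ZMod 3) + 2)) ^ n := by
  induction n with
  | zero => simp
  | succ n ih =>
    have hidx : ((n + 1 : ℕ) : ZMod 3) + 2 = n := by
      push_cast
      rw [add_assoc, show (1 + 2 : ZMod 3) = 0 from rfl, add_zero]
    rw [List.ofFn_succ', List.concat_eq_append, List.prod_append, List.prod_singleton, pow_succ',
      mul_assoc, ← mul_assoc _ _ (f _)]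
    simp only [Fin.val_castSucc, Fin.val_last]
    rw [ih, hidx]
    rcases Nat.even_or_odd n with hn | hn
    · rw [pow_eq_one_of_even_of_sq_eq_one (hf _) hn, one_mul,
        pow_eq_self_of_odd_of_sq_eq_one (hf _) hn.add_one, inv_map_δ_mul_map_a_succ hf]
    · have hidx' : (n : ZMod 3) + 2 = n + 1 + 1 := by rw [add_assoc]; rfl
      rw [pow_eq_self_of_odd_of_sq_eq_one (hf _) hn, ← mul_assoc, hidx',
        inv_map_δ_mul_map_a_succ hf, ← sq, hf,
        pow_eq_one_of_even_of_sq_eq_one (hf _) hn.add_one]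

lemma map_δ_zpow_mul_prod_a_pow_odd (hf : ∀ i, f (a i) ^ 2 = 1) {r : ℕ} {u : ℤ}
    (hu : (u + r) % 3 = 0) (k : Fin r → ℕ) (hodd : ∀ j, Odd (k j)) :
    f (δ ^ u * (List.ofFn fun j : Fin r => a ((j : ℕ) + 1) ^ k j).prod) =
      f (a ((r : ZMod 3) + 2)) ^ (-(r : ℤ)) := by
  obtain ⟨t, ht⟩ := Int.dvd_of_emod_eq_zero hu
  have hprod : f (List.ofFn fun j : Fin r => a ((j : ℕ) + 1) ^ k j).prod =
      (List.ofFn fun j : Fin r => f (a ((j : ℕ) + 1))).prod := by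
    rw [map_list_prod, List.map_ofFn]
    refine congrArg List.prod (congrArg List.ofFn (funext fun j => ?_))
    exact (map_pow f _ _).trans (pow_eq_self_of_odd_of_sq_eq_one (hf _) (hodd j))
  have hδu : f δ ^ u = (f δ)⁻¹ ^ r := by
    rw [show u = 3 * t + -r by lia, zpow_add, zpow_mul, zpow_ofNat, map_δ_pow_three hf,
      one_zpow, one_mul, zpow_neg, ← inv_zpow, zpow_natCast]
  rw [map_mul, map_zpow, hprod, hδu, inv_map_δ_pow_mul_prod_map_a_succ hf, zpow_neg,
    ← inv_zpow, map_a_inv hf, zpow_natCast]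

end Involutions

theorem perm_of_all_odd_general (r : ℕ) (u : ℤ) (hu : (u + (r : ℤ)) % 3 = 0)
    (k : Fin r → ℕ) (hodd : ∀ j, Odd (k j)) (α : B3)
    (hα : α = δ ^ u *
      (List.ofFn (fun j : Fin r => (a (((j : ℕ) : ZMod 3) + 1)) ^ (k j))).prod) :
    permOf α = (permOf (a ((r : ZMod 3) + 2))) ^ (-(r : ℤ)) ∧
    ¬ (permOf α).IsThreeCycle := by
  subst hα
  have key := map_δ_zpow_mul_prod_a_pow_odd permOf_a_sq hu k hodd
  refine ⟨key, fun h3 => h3.sq_ne_one ?_⟩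
  rw [key, ← zpow_natCast, ← zpow_mul, mul_comm, zpow_mul, zpow_natCast, permOf_a_sq, one_zpow]

/-- If `u ≡ -r (mod 3)` and all `k_j` are odd, then
`π(δ^u a₁^{k₁} ⋯ a_r^{k_r}) = π(a_{r+2})^{-r}`, which is not a 3-cycle. -/
theorem perm_of_all_odd (r : ℕ) (hr : 1 ≤ r) (u : ℤ) (hu : (u + (r : ℤ)) % 3 = 0)
    (k : Fin r → ℕ) (hk : ∀ j, 1 ≤ k j) (hodd : ∀ j, Odd (k j)) (α : B3)
    (hα : α = δ ^ u *
      (List.ofFn (fun j : Fin r => (a (((j : ℕ) : ZMod 3) + 1)) ^ (k j))).prod) :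
    permOf α = (permOf (a ((r : ZMod 3) + 2))) ^ (-(r : ℤ)) ∧
    ¬ (permOf α).IsThreeCycle :=
  perm_of_all_odd_general r u hu k hodd α hα
end Braid
end
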